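/- Let k be a perfect field of characteristic p > 2 and g ∈ k[u] a nonzero polynomial. Then every solution (x, y) ∈ k[u]² of x² − g^p·y² = 1 is of the form (x, y) = (x₂^p, y₂^p) for some (x₂, y₂) ∈ k[u]² satisfying x₂² − g·y₂² = 1. -/

import Mathlib

/-!
Differentiating `x² − D·y² = 1` with `D' = 0` gives `x·x' = D·y·y'`. The equation itself shows
that `x` is coprime to `D·y`, so `x ∣ y'`; since `deg y ≤ deg x`, this forces `y' = 0`, and then
`x' = 0`. For `D = gᵖ` in characteristic `p` we have `D' = 0`, and over a perfect field a
polynomial with zero derivative is a `p`-th power. Taking `p`-th roots of the equation, which is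
legitimate because Frobenius is injective on `k[u]`, gives the solution of `x₂² − g·y₂² = 1`.
-/

open Polynomial

theorem Polynomial.exists_eq_pow_of_derivative_eq_zero {R : Type*} [CommRing R]
    [NoZeroDivisors R] (p : ℕ) [ExpChar R p] [PerfectRing R p] {f : R[X]}
    (hf : derivative f = 0) : ∃ h : R[X], f = h ^ p :=
  ⟨_, (expand_contract' p hf).symm.trans (polynomial_expand_eq R p _)⟩

section Pell

variable {R : Type*} [CommRing R] {D x y : R[X]}

theorem isCoprime_of_sq_sub_mul_sq_eq_one (h : x ^ 2 - D * y ^ 2 = 1) : IsCoprime x (D * y) :=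
  ⟨x, -y, by linear_combination h⟩

theorem mul_derivative_eq_of_sq_sub_mul_sq_eq_one [NoZeroDivisors R] (h2 : (2 : R) ≠ 0)
    (hD' : derivative D = 0) (h : x ^ 2 - D * y ^ 2 = 1) :
    x * derivative x = D * (y * derivative y) := by
  have h2' : (2 : R[X]) ≠ 0 := by rwa [← C_ofNat, C_ne_zero]
  have hder := congrArg derivative h
  simp only [derivative_sub, derivative_mul, derivative_sq, C_ofNat, hD', derivative_one] at hder
  exact mul_left_cancel₀ h2' (by linear_combination hder)

theorem natDegree_le_of_sq_sub_mul_sq_eq_one [NoZeroDivisors R] (hD : D ≠ 0)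
    (h : x ^ 2 - D * y ^ 2 = 1) : y.natDegree ≤ x.natDegree := by
  rcases eq_or_ne y 0 with rfl | hy
  · simp
  have hDy : (D * y ^ 2).natDegree = D.natDegree + 2 * y.natDegree := by
    rw [natDegree_mul hD (pow_ne_zero 2 hy), natDegree_pow]
  rcases Nat.eq_zero_or_pos (D * y ^ 2).natDegree with h0 | hpos
  · omega
  have hx : x ^ 2 = D * y ^ 2 + 1 := by linear_combination h
  have := congrArg natDegree hx
  rw [natDegree_pow, natDegree_add_eq_left_of_natDegree_lt (by simpa using hpos)] at this
  omega

theorem derivative_eq_zero_of_sq_sub_mul_sq_eq_one [NoZeroDivisors R] (h2 : (2 : R) ≠ 0)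
    (hD : D ≠ 0) (hD' : derivative D = 0) (h : x ^ 2 - D * y ^ 2 = 1) :
    derivative x = 0 ∧ derivative y = 0 := by
  have key := mul_derivative_eq_of_sq_sub_mul_sq_eq_one h2 hD' h
  have hy' : derivative y = 0 := by
    by_contra hne
    have hdvd : x ∣ derivative y :=
      (isCoprime_of_sq_sub_mul_sq_eq_one h).dvd_of_dvd_mul_left
        ⟨derivative x, by linear_combination -key⟩
    have hy : y.natDegree ≠ 0 := fun h0 => hne (derivative_of_natDegree_zero h0)
    have := natDegree_le_of_dvd hdvd hne
    have := natDegree_derivative_lt hy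
    have := natDegree_le_of_sq_sub_mul_sq_eq_one hD h
    omega
  refine ⟨?_, hy'⟩
  rw [hy', mul_zero, mul_zero, mul_eq_zero] at key
  rcases key with rfl | hx'
  · exact derivative_zero
  · exact hx'

end Pell

/-- **Solutions of `x² − gᵖ·y² = 1` are `p`-th powers.**  Over a perfect field
of characteristic `p > 2`, every solution of `x² − gᵖ·y² = 1` is of the form
`(x₂ᵖ, y₂ᵖ)` with `x₂² − g·y₂² = 1`. -/
theorem pell_pow_char_solutions
    {k : Type*} [Field k] [PerfectField k]
    (p : ℕ) [Fact p.Prime] [CharP k p] (hp : 2 < p)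
    (g : Polynomial k) (hg : g ≠ 0)
    (x y : Polynomial k) (h : x ^ 2 - g ^ p * y ^ 2 = 1) :
    ∃ x₂ y₂ : Polynomial k, x = x₂ ^ p ∧ y = y₂ ^ p ∧
      x₂ ^ 2 - g * y₂ ^ 2 = 1 := by
  have h2 : (2 : k) ≠ 0 := Ring.two_ne_zero (by rw [ringChar.eq k p]; omega)
  have hD' : derivative (g ^ p) = 0 := by simp [derivative_pow]
  obtain ⟨hx', hy'⟩ :=
    derivative_eq_zero_of_sq_sub_mul_sq_eq_one h2 (pow_ne_zero p hg) hD' h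
  obtain ⟨x₂, rfl⟩ := exists_eq_pow_of_derivative_eq_zero p hx'
  obtain ⟨y₂, rfl⟩ := exists_eq_pow_of_derivative_eq_zero p hy'
  refine ⟨x₂, y₂, rfl, rfl, frobenius_inj k[X] p ?_⟩
  simp only [frobenius_def, sub_pow_char, mul_pow, one_pow]
  rw [← h]
  ring
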